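/- Let A ⊆ ℝ^d be a measurable set, x ∈ ℝ^d, p ∈ (0,1), and suppose μ_x(A) ≥ p. Then for every δ ∈ ℝ^d, μ_{x+δ}(A) ≥ Φ(Φ⁻¹(p) − ‖δ‖₂/σ). -/

import Mathlib

open MeasureTheory ProbabilityTheory
open scoped RealInnerProductSpace

/-- `Phi` : cumulative distribution function of the standard real Gaussian N(0,1). -/
noncomputable def Phi : ℝ → ℝ := fun t => ((gaussianReal 0 1) (Set.Iic t)).toReal

/-- `PhiInv` : the standard Gaussian quantile function, inverse of `Phi` on (0,1). -/
noncomputable def PhiInv : ℝ → ℝ := Function.invFun Phi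

/-- `gaussPi d σ x` : the isotropic Gaussian measure on ℝ^d with mean `x` and covariance σ²I,
i.e. the product measure whose i-th factor is the real Gaussian with mean `x i`, variance σ². -/
noncomputable def gaussPi (d : ℕ) (σ : ℝ) (x : EuclideanSpace ℝ (Fin d)) :
    Measure (EuclideanSpace ℝ (Fin d)) :=
  Measure.map (WithLp.toLp 2) (Measure.pi fun i => gaussianReal (x i) ⟨σ ^ 2, sq_nonneg σ⟩)

/-!
The likelihood ratio of `μ_{x+δ}` against `μ_x` is `exp ((⟪z, δ⟫ - ⟪x, δ⟫ - ‖δ‖² / 2) / σ²)`, an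
increasing function of the statistic `⟪z, δ⟫`. By the Neyman–Pearson argument, among measurable
sets of `μ_x`-mass at least `p`, the half-space `{⟪z, δ⟫ ≤ c}` of `μ_x`-mass exactly `p` has the
least `μ_{x+δ}`-mass. Under `μ_y` the statistic `⟪z, δ⟫` is `N(⟪y, δ⟫, σ² ‖δ‖²)`, so that
half-space has `c = ⟪x, δ⟫ + σ ‖δ‖ Φ⁻¹(p)` and `μ_{x+δ}`-mass `Φ(Φ⁻¹(p) - ‖δ‖ / σ)`.
-/

open Set Real
open scoped ENNReal NNReal

theorem MeasureTheory.Measure.map_withDensity_comp {α β : Type*} [MeasurableSpace α]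
    [MeasurableSpace β] {f : α → β} (hf : Measurable f) (μ : Measure α) {g : β → ℝ≥0∞}
    (hg : Measurable g) :
    (μ.withDensity (g ∘ f)).map f = (μ.map f).withDensity g := by
  ext s hs
  rw [Measure.map_apply hf hs, withDensity_apply _ (hf hs), withDensity_apply _ hs,
    setLIntegral_map hs hg hf]
  rfl

theorem MeasureTheory.Measure.pi_withDensity {ι : Type*} [Fintype ι] {α : ι → Type*}
    [∀ i, MeasurableSpace (α i)] (μ : ∀ i, Measure (α i)) [∀ i, IsProbabilityMeasure (μ i)]
    {f : ∀ i, α i → ℝ≥0∞} (hf : ∀ i, Measurable (f i))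
    [∀ i, SigmaFinite ((μ i).withDensity (f i))] :
    Measure.pi (fun i => (μ i).withDensity (f i)) =
      (Measure.pi μ).withDensity (fun x => ∏ i, f i (x i)) := by
  refine Measure.pi_eq fun s hs => ?_
  have hprod : (univ.pi s).indicator (fun x => ∏ i, f i (x i)) =
      fun x => ∏ i, (s i).indicator (f i) (x i) := by
    ext x
    classical simp [Set.indicator_apply, Finset.prod_ite_zero]
  rw [withDensity_apply _ (.univ_pi hs), ← lintegral_indicator (.univ_pi hs), hprod,
    lintegral_prod_eq_prod_lintegral_of_indepFun _ _
      (iIndepFun_pi fun i => ((hf i).indicator (hs i)).aemeasurable)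
      fun i => ((hf i).indicator (hs i)).comp (measurable_pi_apply i)]
  refine Finset.prod_congr rfl fun i _ => ?_
  rw [withDensity_apply _ (hs i), ← lintegral_indicator (hs i)]
  exact (measurePreserving_eval μ i).lintegral_comp ((hf i).indicator (hs i))

/-- The Neyman–Pearson lemma for a likelihood ratio `g ∘ T` monotone in the statistic `T`. -/
theorem withDensity_comp_sublevel_le {α : Type*} [MeasurableSpace α] {μ : Measure α}
    [IsFiniteMeasure μ] {T : α → ℝ} (hT : Measurable T) {g : ℝ → ℝ≥0∞} (hg : Monotone g)
    {B : Set α} (hB : MeasurableSet B) {c : ℝ} (hμ : μ {a | T a ≤ c} ≤ μ B) :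
    μ.withDensity (g ∘ T) {a | T a ≤ c} ≤ μ.withDensity (g ∘ T) B := by
  set H := {a | T a ≤ c}
  have hH : MeasurableSet H := measurableSet_le hT measurable_const
  have hdiff : μ (H \ B) ≤ μ (B \ H) := by
    rw [← measure_inter_add_sdiff H hB, ← measure_inter_add_sdiff B hH, Set.inter_comm] at hμ
    exact (ENNReal.add_le_add_iff_left (measure_ne_top _ _)).1 hμ
  have hHB : ∫⁻ a in H \ B, g (T a) ∂μ ≤ g c * μ (H \ B) :=
    (setLIntegral_mono measurable_const fun a ha => hg ha.1).trans_eq (setLIntegral_const _ _)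
  have hBH : g c * μ (B \ H) ≤ ∫⁻ a in B \ H, g (T a) ∂μ :=
    (setLIntegral_const _ _).symm.trans_le
      (setLIntegral_mono (hg.measurable.comp hT) fun a ha => hg (not_le.1 ha.2).le)
  rw [withDensity_apply _ hH, withDensity_apply _ hB, ← lintegral_inter_add_sdiff _ H hB,
    ← lintegral_inter_add_sdiff _ B hH, Set.inter_comm]
  exact add_le_add le_rfl (hHB.trans ((mul_le_mul_right hdiff _).trans hBH))

theorem continuous_Phi : Continuous Phi := by
  have := nullSingletonClass_gaussianReal (μ := 0) one_ne_zero
  refine continuous_iff_continuousAt.2 fun t => ?_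
  have h := (integrableOn_const (μ := gaussianReal 0 1) (s := Iic (t + 1)) (C := (1 : ℝ))
    (by simp)).continuousOn_Iic_primitive_Iic
  refine (h.congr fun b _ => ?_).continuousAt (Iic_mem_nhds (by linarith))
  simp [Phi, measureReal_def]

theorem Phi_PhiInv {p : ℝ} (hp : p ∈ Ioo (0 : ℝ) 1) : Phi (PhiInv p) = p := by
  have hcdf : Phi = cdf (gaussianReal 0 1) := funext fun t => (cdf_eq_real _ _).symm
  obtain ⟨a, ha⟩ := ((hcdf ▸ tendsto_cdf_atBot _).eventually_lt_const hp.1).exists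
  obtain ⟨b, hb⟩ := ((hcdf ▸ tendsto_cdf_atTop _).eventually_const_lt hp.2).exists
  exact Function.invFun_eq (intermediate_value_univ a b continuous_Phi ⟨ha.le, hb.le⟩)

theorem gaussianReal_eq_map_affine (m s : ℝ) :
    gaussianReal m ⟨s ^ 2, sq_nonneg s⟩ = (gaussianReal 0 1).map (fun z => m + s * z) := by
  rw [← Function.comp_def (fun z => m + z) (fun z => s * z),
    ← Measure.map_map (measurable_const_add m) (measurable_const_mul s),
    gaussianReal_map_const_mul, gaussianReal_map_const_add]
  congr 1
  · simp
  · ext; simp; rfl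

theorem gaussianReal_Iic_toReal_eq_Phi {s : ℝ} (hs : 0 < s) (m c : ℝ) :
    (gaussianReal m ⟨s ^ 2, sq_nonneg s⟩ (Iic c)).toReal = Phi ((c - m) / s) := by
  rw [gaussianReal_eq_map_affine, Measure.map_apply (by fun_prop) measurableSet_Iic, Phi]
  congr 3
  ext z
  simp [le_div_iff₀ hs, mul_comm, le_sub_iff_add_le']

theorem gaussianReal_add_eq_withDensity {v : ℝ≥0} (hv : v ≠ 0) (m t : ℝ) :
    gaussianReal (m + t) v = (gaussianReal m v).withDensity
      (fun z => ENNReal.ofReal (exp ((t * (z - m) - t ^ 2 / 2) / v))) := by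
  rw [gaussianReal_of_var_ne_zero _ hv, gaussianReal_of_var_ne_zero _ hv,
    ← withDensity_mul _ (measurable_gaussianPDF _ _) (by fun_prop)]
  congr 1
  funext z
  simp only [Pi.mul_apply, gaussianPDF, gaussianPDFReal]
  rw [← ENNReal.ofReal_mul (by positivity), mul_assoc _ (rexp _), ← Real.exp_add]
  congr 3
  have : (v : ℝ) ≠ 0 := by simpa using hv
  field_simp
  ring

theorem stdGaussian_map_inner {E : Type*} [NormedAddCommGroup E] [InnerProductSpace ℝ E]
    [FiniteDimensional ℝ E] [MeasurableSpace E] [BorelSpace E] (w : E) :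
    (stdGaussian E).map (fun z => ⟪z, w⟫) = gaussianReal 0 (‖w‖₊ ^ 2) := by
  have h : (fun z => ⟪z, w⟫) = innerSL ℝ w := by
    ext z
    simp [real_inner_comm]
  rw [h, IsGaussian.map_eq_gaussianReal, integral_strongDual_stdGaussian,
    variance_dual_stdGaussian, innerSL_apply_norm]
  congr
  ext
  simp

theorem gaussPi_eq_map_stdGaussian (d : ℕ) (σ : ℝ) (x : EuclideanSpace ℝ (Fin d)) :
    gaussPi d σ x = (stdGaussian (EuclideanSpace ℝ (Fin d))).map (fun z => x + σ • z) := by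
  rw [← map_pi_eq_stdGaussian, Measure.map_map (by fun_prop) (by fun_prop), gaussPi]
  simp_rw [gaussianReal_eq_map_affine]
  rw [← Measure.pi_map_pi fun i => by fun_prop, Measure.map_map (by fun_prop) (by fun_prop)]
  rfl

instance isProbabilityMeasure_gaussPi (d : ℕ) (σ : ℝ) (x : EuclideanSpace ℝ (Fin d)) :
    IsProbabilityMeasure (gaussPi d σ x) := by
  rw [gaussPi_eq_map_stdGaussian]
  exact Measure.isProbabilityMeasure_map (by fun_prop)

theorem gaussPi_map_inner (d : ℕ) (σ : ℝ) (x w : EuclideanSpace ℝ (Fin d)) :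
    (gaussPi d σ x).map (fun z => ⟪z, w⟫) =
      gaussianReal ⟪x, w⟫ ⟨(σ * ‖w‖) ^ 2, sq_nonneg _⟩ := by
  have h : (fun z => ⟪z, w⟫) ∘ (fun z => x + σ • z) =
      (fun t => ⟪x, w⟫ + t) ∘ (fun t => σ * t) ∘ (fun z => ⟪z, w⟫) := by
    ext z
    simp [inner_add_left, real_inner_smul_left]
  rw [gaussPi_eq_map_stdGaussian, Measure.map_map (by fun_prop) (by fun_prop), h,
    ← Measure.map_map (by fun_prop) (by fun_prop), ← Measure.map_map (by fun_prop) (by fun_prop),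
    stdGaussian_map_inner, gaussianReal_map_const_mul, gaussianReal_map_const_add]
  congr 1
  · simp
  · ext
    simp [mul_pow]
    rfl

theorem gaussPi_setOf_inner_le_toReal {d : ℕ} {σ : ℝ} (hσ : 0 < σ)
    (x : EuclideanSpace ℝ (Fin d)) {w : EuclideanSpace ℝ (Fin d)} (hw : w ≠ 0) (c : ℝ) :
    (gaussPi d σ x {z | ⟪z, w⟫ ≤ c}).toReal = Phi ((c - ⟪x, w⟫) / (σ * ‖w‖)) := by
  change (gaussPi d σ x ((fun z => ⟪z, w⟫) ⁻¹' Iic c)).toReal = _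
  rw [← Measure.map_apply (by fun_prop) measurableSet_Iic, gaussPi_map_inner,
    gaussianReal_Iic_toReal_eq_Phi (by positivity)]

theorem gaussPi_add_eq_withDensity {d : ℕ} {σ : ℝ} (hσ : σ ≠ 0)
    (x δ : EuclideanSpace ℝ (Fin d)) :
    gaussPi d σ (x + δ) = (gaussPi d σ x).withDensity
      (fun z => ENNReal.ofReal (exp ((⟪z, δ⟫ - ⟪x, δ⟫ - ‖δ‖ ^ 2 / 2) / σ ^ 2))) := by
  rw [gaussPi, gaussPi]
  -- As written in `gaussPi`, the variance has type `{r // 0 ≤ r}`, which blocks instance search.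
  set v : ℝ≥0 := ⟨σ ^ 2, sq_nonneg σ⟩
  have hv : v ≠ 0 := fun h => pow_ne_zero 2 hσ (congrArg NNReal.toReal h)
  simp_rw [PiLp.add_apply, gaussianReal_add_eq_withDensity hv]
  rw [Measure.pi_withDensity _ fun i => by fun_prop,
    ← Measure.map_withDensity_comp (by fun_prop) _ (by fun_prop)]
  congr 2
  funext z
  rw [Function.comp_apply, ← ENNReal.ofReal_prod_of_nonneg fun i _ => (exp_pos _).le,
    ← Real.exp_sum]
  congr 2
  simp only [PiLp.inner_apply, EuclideanSpace.real_norm_sq_eq, RCLike.inner_apply, conj_trivial]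
  rw [← Finset.sum_div]
  change _ / σ ^ 2 = _
  simp only [mul_sub, Finset.sum_sub_distrib, Finset.sum_div]

/-- Gaussian shift lower bound (Neyman–Pearson lemma consequence): if `μ_x(A) ≥ p` then for
every shift `δ`, `μ_{x+δ}(A) ≥ Φ(Φ⁻¹(p) - ‖δ‖₂/σ)`. -/
theorem gaussian_shift_lower_bound
    {d : ℕ} {σ : ℝ} (hσ : 0 < σ)
    (A : Set (EuclideanSpace ℝ (Fin d))) (hA : MeasurableSet A)
    (x : EuclideanSpace ℝ (Fin d)) (p : ℝ) (hp : p ∈ Set.Ioo (0 : ℝ) 1)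
    (h : p ≤ (gaussPi d σ x A).toReal) :
    ∀ δ : EuclideanSpace ℝ (Fin d),
      Phi (PhiInv p - ‖δ‖ / σ) ≤ (gaussPi d σ (x + δ) A).toReal := by
  intro δ
  rcases eq_or_ne δ 0 with rfl | hδ
  · simpa [Phi_PhiInv hp] using h
  set c := ⟪x, δ⟫ + σ * ‖δ‖ * PhiInv p
  have hx : (gaussPi d σ x {z | ⟪z, δ⟫ ≤ c}).toReal = p := by
    rw [gaussPi_setOf_inner_le_toReal hσ x hδ, ← Phi_PhiInv hp]
    congr 1
    field_simp
    ring
  have hxδ : (gaussPi d σ (x + δ) {z | ⟪z, δ⟫ ≤ c}).toReal = Phi (PhiInv p - ‖δ‖ / σ) := by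
    rw [gaussPi_setOf_inner_le_toReal hσ _ hδ, inner_add_left, real_inner_self_eq_norm_sq]
    congr 1
    field_simp
    ring
  have hmono : Monotone fun s => ENNReal.ofReal (exp ((s - ⟪x, δ⟫ - ‖δ‖ ^ 2 / 2) / σ ^ 2)) :=
    fun s t hst => ENNReal.ofReal_le_ofReal (exp_le_exp.2 (by gcongr))
  rw [← hxδ]
  refine ENNReal.toReal_mono (measure_ne_top _ _) ?_
  rw [gaussPi_add_eq_withDensity hσ.ne']
  exact withDensity_comp_sublevel_le (T := (⟪·, δ⟫)) (by fun_prop) hmono hA <|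
    (ENNReal.toReal_le_toReal (measure_ne_top _ _) (measure_ne_top _ _)).1 (hx.trans_le h)
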